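/- Fix s, h ∈ ℂ. On A = ℂ[x⁰,x¹,x²,x³], let S be the ℂ-algebra endomorphism substituting x⁰ ↦ x⁰ − i(1−s)h and fixing x¹, x², x³ (this is the shift operator e^{(1−s)hP₀} with P₀ = −i∂₀), and define the operators x̂⁰_s := x⁰ + ihs·Σ_{k=1}^{3} x^k∘∂_k and x̂^j_s := x^j∘S for j = 1,2,3. Then [x̂⁰_s, x̂^j_s] = ih·x̂^j_s and [x̂^j_s, x̂^k_s] = 0 for all j,k ∈ {1,2,3}. -/

import Mathlib

open MvPolynomial

noncomputable section

/-- The multiplication-by-`x^μ` operator on `ℂ[x⁰,x¹,x²,x³]`. -/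
def Xop (μ : Fin 4) : Module.End ℂ (MvPolynomial (Fin 4) ℂ) :=
  LinearMap.mulLeft ℂ (X μ)

/-- The partial-derivative operator `∂_μ` on `ℂ[x⁰,x¹,x²,x³]`. -/
def Dop (μ : Fin 4) : Module.End ℂ (MvPolynomial (Fin 4) ℂ) :=
  (pderiv μ).toLinearMap

/-- The shift operator `e^{(1−s)hP₀}` (with `P₀ = −i∂₀`): the `ℂ`-algebra endomorphism
substituting `x⁰ ↦ x⁰ − i(1−s)h` and fixing `x¹, x², x³`. -/
def shiftOp (s h : ℂ) : Module.End ℂ (MvPolynomial (Fin 4) ℂ) :=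
  (aeval (fun μ : Fin 4 =>
    if μ = 0 then X 0 - C (Complex.I * (1 - s) * h) else X μ) :
      MvPolynomial (Fin 4) ℂ →ₐ[ℂ] MvPolynomial (Fin 4) ℂ).toLinearMap

/-- `x̂⁰_s := x⁰ + ihs·Σ_{k=1}^{3} x^k∘∂_k`. -/
def xhat0 (s h : ℂ) : Module.End ℂ (MvPolynomial (Fin 4) ℂ) :=
  Xop 0 + (Complex.I * h * s) • ∑ k ∈ ({1, 2, 3} : Finset (Fin 4)), Xop k * Dop k

/-- `x̂^j_s := x^j ∘ S`. -/
def xhatSp (s h : ℂ) (j : Fin 4) : Module.End ℂ (MvPolynomial (Fin 4) ℂ) :=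
  Xop j * shiftOp s h

/-!
Only commutation relations are used. `x̂⁰_s` is `x⁰` plus `ihs` times the spatial Euler operator
`Σ_k x^k ∂_k`. Since `∂_k` commutes with the shift `S` and `[∂_k, x^j] = δ_kj`, the operator
`x^j S` has weight `1` under the Euler operator; since `S` shifts `x⁰` by `−i(1−s)h`, it has weight
`i(1−s)h` under `x⁰`. The weights add up to `ih`. The spatial operators commute because
`x¹, x², x³` commute with each other and with `S`.
-/

section HeisenbergAlgebra

attribute [local instance] LieRing.ofAssociativeRing

variable {A : Type*} [Ring A]

theorem Ring.mul_lie (a b c : A) : ⁅a * b, c⁆ = a * ⁅b, c⁆ + ⁅a, c⁆ * b := by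
  simp only [Ring.lie_def, mul_sub, sub_mul, mul_assoc]
  abel

theorem Ring.lie_mul (a b c : A) : ⁅a, b * c⁆ = b * ⁅a, c⁆ + ⁅a, b⁆ * c := by
  simp only [Ring.lie_def, mul_sub, sub_mul, mul_assoc]
  abel

variable {ι : Type*} [DecidableEq ι] {x d : ι → A} {S : A}

theorem lie_x_mul_d_x_mul {j k : ι} (hxx : Commute (x k) (x j))
    (hdx : ⁅d k, x j⁆ = if k = j then 1 else 0) (hdS : Commute (d k) S)
    (hxS : Commute (x k) S) :
    ⁅x k * d k, x j * S⁆ = if k = j then x j * S else 0 := by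
  have hS : ⁅x k * d k, S⁆ = 0 := by
    rw [Ring.mul_lie, hdS.lie_eq, hxS.lie_eq, mul_zero, zero_mul, add_zero]
  have hx : ⁅x k * d k, x j⁆ = if k = j then x j else 0 := by
    rw [Ring.mul_lie, hdx, hxx.lie_eq, zero_mul, add_zero]
    split_ifs with hkj
    · rw [hkj, mul_one]
    · rw [mul_zero]
  rw [Ring.lie_mul, hS, hx, mul_zero, zero_add]
  split_ifs
  · rfl
  · rw [zero_mul]

variable {R : Type*} [CommRing R] [Algebra R A] {c : R}

theorem lie_mul_eq_smul_of_commute {a b : A} (hab : Commute a b) (haS : ⁅a, S⁆ = c • S) :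
    ⁅a, b * S⁆ = c • (b * S) := by
  rw [Ring.lie_mul, haS, hab.lie_eq, zero_mul, add_zero, mul_smul_comm]

theorem lie_add_smul_sum_x_mul_d {x₀ : A} {K : Finset ι} {j : ι} (hj : j ∈ K)
    (h₀ : Commute x₀ (x j)) (h₀S : ⁅x₀, S⁆ = c • S) (hxx : ∀ k ∈ K, Commute (x k) (x j))
    (hdx : ∀ k ∈ K, ⁅d k, x j⁆ = if k = j then 1 else 0) (hdS : ∀ k ∈ K, Commute (d k) S)
    (hxS : ∀ k ∈ K, Commute (x k) S) (t : R) :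
    ⁅x₀ + t • ∑ k ∈ K, x k * d k, x j * S⁆ = (c + t) • (x j * S) := by
  have euler : ⁅∑ k ∈ K, x k * d k, x j * S⁆ = x j * S := by
    rw [sum_lie, Finset.sum_congr rfl fun k hk =>
      lie_x_mul_d_x_mul (hxx k hk) (hdx k hk) (hdS k hk) (hxS k hk),
      Finset.sum_ite_eq', if_pos hj]
  rw [add_lie, smul_lie, euler, lie_mul_eq_smul_of_commute h₀ h₀S, add_smul]

end HeisenbergAlgebra

namespace MvPolynomial

variable {σ R : Type*} [CommSemiring R]

theorem pderiv_aeval_X_add_C (c : σ → R) (i : σ) (p : MvPolynomial σ R) :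
    pderiv i (aeval (fun μ => (X μ + C (c μ) : MvPolynomial σ R)) p)
      = aeval (fun μ => (X μ + C (c μ) : MvPolynomial σ R)) (pderiv i p) := by
  classical
  induction p using MvPolynomial.induction_on with
  | C a => simp
  | add p q hp hq => simp only [map_add, hp, hq]
  | mul_X p n ih =>
    have hX : pderiv i (X n + C (c n) : MvPolynomial σ R) =
        aeval (fun μ => (X μ + C (c μ) : MvPolynomial σ R))
          (pderiv i (X n : MvPolynomial σ R)) := by
      by_cases hin : i = n
      · subst hin; simp
      · simp [pderiv_X_of_ne (Ne.symm hin)]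
    simp only [map_mul, map_add, aeval_X, pderiv_mul, ih, hX]

end MvPolynomial

section Operators

variable (s h : ℂ)

theorem Xop_commute (μ ν : Fin 4) : Commute (Xop μ) (Xop ν) :=
  LinearMap.ext fun p => by
    simp only [Xop, Module.End.mul_apply, LinearMap.mulLeft_apply]
    ring

theorem lie_Dop_Xop (k j : Fin 4) : ⁅Dop k, Xop j⁆ = if k = j then 1 else 0 := by
  refine LinearMap.ext fun p => ?_
  by_cases hkj : k = j
  · subst hkj; simp [Ring.lie_def, Dop, Xop]
  · simp [Ring.lie_def, Dop, Xop, hkj]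

theorem shiftOp_eq_aeval_X_add_C :
    shiftOp s h = (aeval (fun μ : Fin 4 =>
      X μ + C (if μ = 0 then -(Complex.I * (1 - s) * h) else 0)) :
        MvPolynomial (Fin 4) ℂ →ₐ[ℂ] MvPolynomial (Fin 4) ℂ).toLinearMap := by
  rw [shiftOp]
  congr 3
  funext μ
  split_ifs with hμ <;> simp [hμ, sub_eq_add_neg]

theorem Dop_commute_shiftOp (k : Fin 4) : Commute (Dop k) (shiftOp s h) :=
  LinearMap.ext fun p => by
    simpa [shiftOp_eq_aeval_X_add_C, Dop] using pderiv_aeval_X_add_C _ k p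

theorem Xop_commute_shiftOp {j : Fin 4} (hj : j ≠ 0) : Commute (Xop j) (shiftOp s h) :=
  LinearMap.ext fun p => by simp [Xop, shiftOp, hj]

theorem lie_Xop_zero_shiftOp :
    ⁅Xop 0, shiftOp s h⁆ = (Complex.I * (1 - s) * h) • shiftOp s h :=
  LinearMap.ext fun p => by
    simp only [Ring.lie_def, LinearMap.sub_apply, LinearMap.smul_apply, Module.End.mul_apply, Xop,
      LinearMap.mulLeft_apply, shiftOp, AlgHom.toLinearMap_apply, map_mul, aeval_X, if_pos,
      smul_eq_C_mul]
    ring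

end Operators

/-- The Abelian-twist family of Heisenberg realizations of κ-Minkowski spacetime:
`[x̂⁰_s, x̂^j_s] = ih·x̂^j_s` and `[x̂^j_s, x̂^k_s] = 0`. -/
theorem abelian_realization_kappa_minkowski (s h : ℂ) :
    (∀ j ∈ ({1, 2, 3} : Finset (Fin 4)),
      xhat0 s h * xhatSp s h j - xhatSp s h j * xhat0 s h
        = (Complex.I * h) • xhatSp s h j) ∧
    (∀ j ∈ ({1, 2, 3} : Finset (Fin 4)), ∀ k ∈ ({1, 2, 3} : Finset (Fin 4)),
      xhatSp s h j * xhatSp s h k - xhatSp s h k * xhatSp s h j = 0) := by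
  have hxS : ∀ j ∈ ({1, 2, 3} : Finset (Fin 4)), Commute (Xop j) (shiftOp s h) :=
    fun j hj => Xop_commute_shiftOp s h (ne_of_mem_of_not_mem hj (by decide))
  refine ⟨fun j hj => ?_, fun j hj k hk => ?_⟩
  · have key := lie_add_smul_sum_x_mul_d hj (Xop_commute 0 j) (lie_Xop_zero_shiftOp s h)
      (fun k _ => Xop_commute k j) (fun k _ => lie_Dop_Xop k j)
      (fun k _ => Dop_commute_shiftOp s h k) hxS (Complex.I * h * s)
    rw [show Complex.I * (1 - s) * h + Complex.I * h * s = Complex.I * h by ring] at key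
    exact key
  · exact sub_eq_zero.mpr
      (((Xop_commute j k).mul_right (hxS j hj)).mul_left
        ((hxS k hk).symm.mul_right (Commute.refl _))).eq

end
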